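/- Let H be a self-adjoint operator on a Hilbert space and D a dense set of vectors such that for every f ∈ D, the function λ ↦ ⟨(H − λ)⁻¹ f, f⟩ defined on the upper half-plane extends analytically through every point of an open interval (a,b) ⊂ ℝ except a discrete set S ⊂ (a,b). Then H has no singular continuous spectrum in (a,b). -/

import Mathlib

/-!
Near a point where the Borel transform `G` of a finite measure `ν` on `ℝ` extends continuously,
`G` is bounded on the upper half-plane, and `ν [t - r, t + r] ≤ 2r · Im G(t + ir)`. So `ν` is
dominated by a multiple of Lebesgue measure on all small balls there, and the Besicovitch
differentiation theorem makes it absolutely continuous near that point. Covering `(a,b) \ S`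
by countably many such neighbourhoods, the spectral measure of every vector of `D` is absolutely
continuous on `(a,b) \ S`; the bounds `μ f ≤ ‖f‖²` and `μ (f + g) ≤ 2 (μ f + μ g)` carry this
over to every vector by density. The discrete, hence countable, set `S` only carries atoms.
-/

open MeasureTheory Complex Set Filter Topology
open scoped InnerProductSpace NNReal ENNReal

/-- A measure has no singular continuous part on `s` if every Lebesgue-null subset of `s`,
with the atoms removed, has measure zero. -/
def NoSingularContinuousOn (μ : Measure ℝ) (s : Set ℝ) : Prop :=
  ∀ B : Set ℝ, B ⊆ s → MeasurableSet B → volume B = 0 →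
    μ (B \ {x : ℝ | μ {x} ≠ 0}) = 0

theorem measure_le_mul_of_eventually_closedBall_le {α : Type*} [MetricSpace α]
    [SecondCountableTopology α] [MeasurableSpace α] [BorelSpace α] [HasBesicovitchCovering α]
    (ν μ : Measure α) [SFinite ν] [IsLocallyFiniteMeasure μ] (C : ℝ≥0) {s : Set α}
    (h : ∀ x ∈ s, ∀ᶠ r in 𝓝[>] 0, ν (Metric.closedBall x r) ≤ C * μ (Metric.closedBall x r)) :
    ν s ≤ C * μ s :=
  -- The Vitali family is built from `ν` itself, so the required absolute continuity is `ν ≪ ν`.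
  (Besicovitch.vitaliFamily ν).measure_le_of_frequently_le (C • μ) .rfl s fun x hx =>
    (Besicovitch.tendsto_filterAt ν x).frequently (h x hx).frequently

theorem absolutelyContinuous_restrict_of_forall_nhds {α : Type*} [TopologicalSpace α]
    [SecondCountableTopology α] [MeasurableSpace α] {ν μ : Measure α} {s : Set α}
    (h : ∀ x ∈ s, ∃ u ∈ 𝓝 x, ν.restrict u ≪ μ) : ν.restrict s ≪ μ := by
  choose! u hu hνu using h
  obtain ⟨t, hts, htc, hst⟩ := TopologicalSpace.countable_cover_nhdsWithin fun x hx =>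
    mem_nhdsWithin_of_mem_nhds (hu x hx)
  refine Measure.AbsolutelyContinuous.mk fun N hN hμN => ?_
  rw [Measure.restrict_apply hN, ← nonpos_iff_eq_zero]
  calc ν (N ∩ s) ≤ ν (⋃ x ∈ t, N ∩ u x) := by
        rw [← inter_iUnion₂]
        exact measure_mono (inter_subset_inter_right _ hst)
    _ = 0 := (measure_biUnion_null_iff htc).2 fun x hx =>
        nonpos_iff_eq_zero.1 <| (Measure.le_restrict_apply _ _).trans (hνu x (hts hx) hμN).le

theorem Set.countable_of_forall_not_accPt {X : Type*} [TopologicalSpace X]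
    [SecondCountableTopology X] {S : Set X} (h : ∀ x ∈ S, ¬AccPt x (𝓟 S)) : S.Countable := by
  have : DiscreteTopology S :=
    discreteTopology_subtype_iff.mpr fun x hx => Filter.not_neBot.mp (h x hx)
  exact Set.countable_coe_iff.mp (TopologicalSpace.separableSpace_iff_countable.mp inferInstance)

theorem eq_zero_of_dense_of_le_norm_sq {E : Type*} [SeminormedAddCommGroup E] {φ : E → ℝ≥0∞}
    (hφ : ∀ f, φ f ≤ ENNReal.ofReal (‖f‖ ^ 2)) (hadd : ∀ f g, φ (f + g) ≤ 2 * (φ f + φ g))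
    {D : Set E} (hD : Dense D) (h0 : ∀ g ∈ D, φ g = 0) (f : E) : φ f = 0 := by
  obtain ⟨u, huD, hu⟩ := mem_closure_iff_seq_limit.1 (hD f)
  have hlim : Tendsto (fun n => 2 * ENNReal.ofReal (‖f - u n‖ ^ 2)) atTop (𝓝 0) := by
    have h : Tendsto (fun n => f - u n) atTop (𝓝 0) := by simpa using hu.const_sub f
    simpa using ENNReal.Tendsto.const_mul (ENNReal.tendsto_ofReal (h.norm.pow 2))
      (.inr ENNReal.ofNat_ne_top)
  refine le_antisymm (ge_of_tendsto' hlim fun n => ?_) bot_le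
  calc φ f = φ (f - u n + u n) := by rw [sub_add_cancel]
    _ ≤ 2 * (φ (f - u n) + φ (u n)) := hadd _ _
    _ ≤ 2 * ENNReal.ofReal (‖f - u n‖ ^ 2) := by
        rw [h0 _ (huD n), add_zero]
        gcongr
        exact hφ _

noncomputable def borelTransform (ν : Measure ℝ) (z : ℂ) : ℂ := ∫ t : ℝ, ((t : ℂ) - z)⁻¹ ∂ν

section BorelTransform

variable (ν : Measure ℝ) [IsFiniteMeasure ν]

theorem im_inv_ofReal_sub (s : ℝ) (z : ℂ) :
    ((s : ℂ) - z)⁻¹.im = z.im / ((s - z.re) ^ 2 + z.im ^ 2) := by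
  rw [inv_im, normSq_apply]
  simp
  ring

theorem norm_inv_ofReal_sub_le (s : ℝ) {z : ℂ} (hz : 0 < z.im) :
    ‖((s : ℂ) - z)⁻¹‖ ≤ z.im⁻¹ := by
  rw [norm_inv]
  refine inv_anti₀ hz ?_
  simpa using (neg_le_abs _).trans (abs_im_le_norm ((s : ℂ) - z))

theorem integrable_inv_ofReal_sub {z : ℂ} (hz : 0 < z.im) :
    Integrable (fun s : ℝ => ((s : ℂ) - z)⁻¹) ν := by
  refine (integrable_const z.im⁻¹).mono' ?_ (.of_forall fun s => norm_inv_ofReal_sub_le s hz)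
  refine (Continuous.inv₀ (by fun_prop) fun s hs => ?_).aestronglyMeasurable
  simpa [hz.ne'] using congrArg im hs

theorem im_borelTransform {z : ℂ} (hz : 0 < z.im) :
    (borelTransform ν z).im = ∫ s, z.im / ((s - z.re) ^ 2 + z.im ^ 2) ∂ν := by
  simp_rw [← im_inv_ofReal_sub]
  exact (integral_im (integrable_inv_ofReal_sub ν hz)).symm

theorem measure_closedBall_le_im_borelTransform {z : ℂ} (hz : 0 < z.im) :
    ν (Metric.closedBall z.re z.im)
      ≤ ENNReal.ofReal (borelTransform ν z).im * volume (Metric.closedBall z.re z.im) := by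
  set P : ℝ → ℝ := fun s => z.im / ((s - z.re) ^ 2 + z.im ^ 2)
  have hP_nonneg (s : ℝ) : 0 ≤ P s := by positivity
  have hP_int : Integrable P ν := by
    simpa only [P, ← im_inv_ofReal_sub, RCLike.im_to_complex]
      using (integrable_inv_ofReal_sub ν hz).im
  have hP_ball : ∀ s ∈ Metric.closedBall z.re z.im, (2 * z.im)⁻¹ ≤ P s := by
    intro s hs
    rw [Metric.mem_closedBall, Real.dist_eq, abs_le] at hs
    rw [inv_eq_one_div, div_le_div_iff₀ (by positivity) (by positivity)]
    nlinarith
  have hball :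
      (ν (Metric.closedBall z.re z.im)).toReal ≤ (borelTransform ν z).im * (2 * z.im) := by
    rw [im_borelTransform ν hz, ← div_le_iff₀ (by positivity), div_eq_inv_mul]
    calc (2 * z.im)⁻¹ * (ν (Metric.closedBall z.re z.im)).toReal
        ≤ ∫ s in Metric.closedBall z.re z.im, P s ∂ν :=
          setIntegral_ge_of_const_le_real measurableSet_closedBall (measure_ne_top _ _) hP_ball
            hP_int.integrableOn
      _ ≤ ∫ s, P s ∂ν := setIntegral_le_integral hP_int (.of_forall hP_nonneg)
  rw [Real.volume_closedBall, ← ENNReal.ofReal_mul' (by positivity),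
    ← ENNReal.ofReal_toReal (measure_ne_top ν _)]
  exact ENNReal.ofReal_le_ofReal hball

theorem absolutelyContinuous_restrict_ball_of_norm_borelTransform_le {x ε C : ℝ}
    (hC : ∀ z ∈ Metric.ball (x : ℂ) ε, 0 < z.im → ‖borelTransform ν z‖ ≤ C) :
    ν.restrict (Metric.ball x (ε / 2)) ≪ volume := by
  refine Measure.AbsolutelyContinuous.mk fun N hN hN0 => ?_
  rw [Measure.restrict_apply hN, ← nonpos_iff_eq_zero]
  calc ν (N ∩ Metric.ball x (ε / 2)) ≤ C.toNNReal * volume (N ∩ Metric.ball x (ε / 2)) := by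
        refine measure_le_mul_of_eventually_closedBall_le ν volume _ fun t ht => ?_
        have htx : dist t x < ε / 2 := ht.2
        filter_upwards [Ioo_mem_nhdsGT (dist_nonneg.trans_lt htx)] with r hr
        have hz : (⟨t, r⟩ : ℂ) ∈ Metric.ball (x : ℂ) ε := by
          rw [Metric.mem_ball, dist_eq]
          calc ‖(⟨t, r⟩ : ℂ) - x‖ ≤ |t - x| + |r| := by
                simpa using norm_le_abs_re_add_abs_im ((⟨t, r⟩ : ℂ) - x)
            _ < ε := by
                rw [← Real.dist_eq, abs_of_pos hr.1]
                linarith [hr.2]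
        refine (measure_closedBall_le_im_borelTransform ν (z := ⟨t, r⟩) hr.1).trans ?_
        gcongr
        exact ENNReal.ofReal_le_ofReal ((im_le_norm _).trans (hC _ hz hr.1))
    _ = 0 := by rw [measure_mono_null inter_subset_left hN0, mul_zero]

theorem exists_nhds_absolutelyContinuous_of_continuousOn_extension {x ε : ℝ} (hε : 0 < ε)
    {F : ℂ → ℂ} (hF : ContinuousOn F (Metric.ball (x : ℂ) ε))
    (hFG : ∀ z ∈ Metric.ball (x : ℂ) ε, 0 < z.im → F z = borelTransform ν z) :
    ∃ u ∈ 𝓝 x, ν.restrict u ≪ volume := by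
  have hsub : Metric.closedBall (x : ℂ) (ε / 2) ⊆ Metric.ball (x : ℂ) ε :=
    Metric.closedBall_subset_ball (by linarith)
  obtain ⟨C, hC⟩ :=
    (isCompact_closedBall (x : ℂ) (ε / 2)).exists_bound_of_continuousOn (hF.mono hsub)
  refine ⟨_, Metric.ball_mem_nhds x (by positivity),
    absolutelyContinuous_restrict_ball_of_norm_borelTransform_le ν (ε := ε / 2) (C := C)
      fun z hz hz0 => ?_⟩
  rw [← hFG z (hsub (Metric.ball_subset_closedBall hz)) hz0]
  exact hC z (Metric.ball_subset_closedBall hz)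

end BorelTransform

theorem noSingularContinuousOn_of_absolutelyContinuous_restrict_diff {μ : Measure ℝ}
    {s S : Set ℝ} (hS : S.Countable) (h : μ.restrict (s \ S) ≪ volume) :
    NoSingularContinuousOn μ s := by
  intro B hBs _ hB0
  have hBS : μ (B \ S) = 0 := by
    rw [← Measure.restrict_eq_self μ (sdiff_subset_sdiff_left hBs)]
    exact h (measure_mono_null sdiff_subset hB0)
  have hS_atoms : μ (S \ {x | μ {x} ≠ 0}) = 0 := by
    rw [← biUnion_of_singleton (S \ _), measure_biUnion_null_iff (hS.mono sdiff_subset)]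
    exact fun x hx => not_not.1 hx.2
  refine measure_mono_null (fun x hx => ?_) (measure_union_null hBS hS_atoms)
  by_cases hxS : x ∈ S
  · exact Or.inr ⟨hxS, hx.2⟩
  · exact Or.inl ⟨hx.1, hxS⟩

theorem no_singular_continuous_spectrum_of_limiting_absorption
    {E : Type*} [NormedAddCommGroup E]
    (μ : E → Measure ℝ) (hfin : ∀ f, IsFiniteMeasure (μ f))
    (hquad : ∀ f : E, ∀ B : Set ℝ, μ f B ≤ ENNReal.ofReal (‖f‖ ^ 2))
    (htri : ∀ f g : E, ∀ B : Set ℝ, μ (f + g) B ≤ 2 * (μ f B + μ g B))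
    (D : Set E) (hD : Dense D)
    (a b : ℝ)
    (S : Set ℝ) (hS : S ⊆ Ioo a b)
    (hSdisc : ∀ x ∈ Ioo a b, ¬ AccPt x (Filter.principal S))
    (hcont : ∀ f ∈ D, ∀ x ∈ Ioo a b \ S, ∃ ε > (0 : ℝ), ∃ F : ℂ → ℂ,
      DifferentiableOn ℂ F (Metric.ball ((x : ℝ) : ℂ) ε) ∧
      ∀ z ∈ Metric.ball ((x : ℝ) : ℂ) ε, 0 < z.im →
        F z = ∫ t : ℝ, ((t : ℂ) - z)⁻¹ ∂(μ f)) :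
    ∀ f : E, NoSingularContinuousOn (μ f) (Ioo a b) := by
  have hS_countable : S.Countable :=
    Set.countable_of_forall_not_accPt fun x hx => hSdisc x (hS hx)
  have hD_ac : ∀ g ∈ D, (μ g).restrict (Ioo a b \ S) ≪ volume := fun g hg =>
    absolutelyContinuous_restrict_of_forall_nhds fun x hx => by
      obtain ⟨ε, hε, F, hF, hFG⟩ := hcont g hg x hx
      exact exists_nhds_absolutelyContinuous_of_continuousOn_extension (μ g) hε hF.continuousOn
        hFG
  intro f
  refine noSingularContinuousOn_of_absolutelyContinuous_restrict_diff hS_countable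
    (Measure.AbsolutelyContinuous.mk fun N hN hN0 => ?_)
  rw [Measure.restrict_apply hN]
  exact eq_zero_of_dense_of_le_norm_sq (φ := fun g => μ g (N ∩ (Ioo a b \ S)))
    (fun g => hquad g _) (fun g g' => htri g g' _) hD
    (fun g hg => (Measure.restrict_apply hN).symm.trans (hD_ac g hg hN0)) f
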